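/- Let P be a monic polynomial of degree n with all zeros on the unit circle, written P(z) = ∏(z - e^{it_j}) with 0 ≤ t_1 < ... < t_n < 2π and t_{n+1} = t_1 + 2π. Then min_{1≤j≤n} max_{t ∈ [t_j, t_{j+1}]} |P(e^{it})| ≤ 2. That is, there exists a closed arc between two consecutive zeros on which |P(e^{it})| ≤ 2 for the maximum over that arc. -/

import Mathlib

/-!
On the circle, write `z = exp (s * I)` and `T = ∑ t k`. Both `P z` and `z ^ n - w`, with
`w = exp ((T - (n + 1) * π) * I)`, are one and the same unimodular phase times a real function of
`s`: `2 ^ n * ∏ sin ((t k - s) / 2)` and `2 * sin ((n * s - T + (n + 1) * π) / 2)` respectively.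
Suppose `|P| > 2` somewhere inside every arc. At those points the difference `g` of the two real
functions has the sign of the first one, which alternates from arc to arc, and
`g (s + 2π) = (-1) ^ n * g s`. So `g` has `n` zeros that are distinct modulo `2π`, and at each of
them `P z = z ^ n - w`. As `P - (X ^ n - w)` has degree `< n`, it vanishes identically, and then
`|P| = |z ^ n - w| ≤ 2` on the whole circle: a contradiction.
-/

open Complex Real Set Polynomial

noncomputable section

theorem exp_mul_I_sub_exp_mul_I (a b : ℝ) :
    exp (a * I) - exp (b * I) =
      -2 * I * exp (((a + b) / 2 : ℝ) * I) * (Real.sin ((b - a) / 2) : ℝ) := by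
  have ha : exp (a * I) = exp (((a + b) / 2 : ℝ) * I) * exp (((a - b) / 2 : ℝ) * I) := by
    rw [← Complex.exp_add]; push_cast; ring_nf
  have hb : exp (b * I) = exp (((a + b) / 2 : ℝ) * I) * exp (-((a - b) / 2 : ℝ) * I) := by
    rw [← Complex.exp_add]; push_cast; ring_nf
  rw [ha, hb, ofReal_sin, Complex.sin]
  push_cast
  ring_nf
  rw [I_sq]
  ring_nf

theorem strictMonoOn_Icc_add_one_of_lt {α : Type*} [Preorder α] {f : ℕ → α} {a b : ℕ}
    (hf : StrictMonoOn f (Set.Icc a b)) (hb : f b < f (b + 1)) :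
    StrictMonoOn f (Set.Icc a (b + 1)) := by
  rintro i ⟨hai, hib⟩ k ⟨hak, hkb⟩ hik
  rcases (by omega : k ≤ b ∨ k = b + 1) with hk | rfl
  · exact hf ⟨hai, by omega⟩ ⟨hak, hk⟩ hik
  · exact (hf.monotoneOn ⟨hai, by omega⟩ ⟨by omega, le_rfl⟩ (by omega)).trans_lt hb

theorem Polynomial.Monic.eq_X_pow_sub_C_of_eval_eq {R κ : Type*} [CommRing R] [IsDomain R]
    {p : R[X]} (hp : p.Monic) {n : ℕ} (hdeg : p.natDegree = n) (hn : 0 < n) {w : R}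
    (J : Finset κ) {v : κ → R} (hv : InjOn v J) (hJ : n ≤ J.card)
    (heval : ∀ j ∈ J, p.eval (v j) = (X ^ n - C w).eval (v j)) : p = X ^ n - C w := by
  refine eq_of_degree_sub_lt_of_eval_index_eq J hv ?_ heval
  have hdeg' : p.degree = n := by rw [degree_eq_natDegree hp.ne_zero, hdeg]
  calc (p - (X ^ n - C w)).degree < p.degree :=
        degree_sub_lt_left (by rw [hdeg', degree_X_pow_sub_C hn]) hp.ne_zero
          (by rw [hp.leadingCoeff, leadingCoeff_X_pow_sub_C hn])
    _ ≤ J.card := by rw [hdeg']; exact_mod_cast hJ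

theorem exists_mem_Ioo_eq_zero_of_alternating {g : ℝ → ℝ} (hg : Continuous g) {a b : ℝ}
    (hab : a ≤ b) {j : ℕ} (ha : 0 < (-1) ^ j * g a) (hb : 0 < (-1) ^ (j + 1) * g b) :
    ∃ r ∈ Ioo a b, g r = 0 := by
  rw [pow_succ] at hb
  rcases neg_one_pow_eq_or ℝ j with h | h <;> rw [h] at ha hb
  · exact intermediate_value_Ioo' hab hg.continuousOn ⟨by linarith, by linarith⟩
  · exact intermediate_value_Ioo hab hg.continuousOn ⟨by linarith, by linarith⟩

theorem exists_zeros_interlacing_of_alternating {g : ℝ → ℝ} (hg : Continuous g) {m : ℕ}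
    {y : ℕ → ℝ} (hy : StrictMonoOn y (Set.Icc 1 (m + 1)))
    (hsign : ∀ j ∈ Set.Icc 1 (m + 1), 0 < (-1) ^ j * g (y j)) :
    ∃ r : ℕ → ℝ, ∀ j ∈ Set.Icc 1 m, r j ∈ Ioo (y j) (y (j + 1)) ∧ g (r j) = 0 := by
  have h : ∀ j ∈ Set.Icc 1 m, ∃ r ∈ Ioo (y j) (y (j + 1)), g r = 0 := fun j ⟨h1, h2⟩ =>
    exists_mem_Ioo_eq_zero_of_alternating hg
      (hy.monotoneOn ⟨h1, by omega⟩ ⟨by omega, by omega⟩ (by omega))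
      (hsign j ⟨h1, by omega⟩) (hsign (j + 1) ⟨by omega, by omega⟩)
  choose! r hr using h
  exact ⟨r, hr⟩

theorem injOn_exp_mul_I_of_interlacing {m : ℕ} {y r : ℕ → ℝ}
    (hy : MonotoneOn y (Set.Icc 1 (m + 1))) (hper : y (m + 1) ≤ y 1 + 2 * π)
    (hr : ∀ j ∈ Set.Icc 1 m, r j ∈ Ioo (y j) (y (j + 1))) :
    InjOn (fun j => exp (r j * I)) (Set.Icc 1 m) := by
  have hrange : MapsTo r (Set.Icc 1 m) (Ico (y 1) (y 1 + 2 * π)) := fun j ⟨h1, h2⟩ =>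
    ⟨(hy ⟨le_rfl, by omega⟩ ⟨h1, by omega⟩ h1).trans (hr j ⟨h1, h2⟩).1.le,
      (hr j ⟨h1, h2⟩).2.trans_le
        ((hy ⟨by omega, by omega⟩ ⟨by omega, le_rfl⟩ (by omega)).trans hper)⟩
  have hexp : InjOn (fun x : ℝ => exp (x * I)) (Ico (y 1) (y 1 + 2 * π)) :=
    fun a ha b hb hab => Circle.exp_injOn_Ico (add_sub_cancel_left _ _).le ha hb (Subtype.ext hab)
  have hmono : StrictMonoOn r (Set.Icc 1 m) := fun j ⟨hj1, hjm⟩ k ⟨hk1, hkm⟩ hjk =>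
    calc r j < y (j + 1) := (hr j ⟨hj1, hjm⟩).2
      _ ≤ y k := hy ⟨by omega, by omega⟩ ⟨hk1, by omega⟩ hjk
      _ < r k := (hr k ⟨hk1, hkm⟩).1
  exact hexp.comp hmono.injOn hrange

theorem exists_zeros_injOn_exp_mul_I_of_alternating {g : ℝ → ℝ} (hg : Continuous g) {m : ℕ}
    (hm : 1 ≤ m) (hanti : ∀ s, g (s + 2 * π) = (-1) ^ m * g s) {x : ℕ → ℝ}
    (hx : StrictMonoOn x (Set.Icc 1 m)) (hwin : x m < x 1 + 2 * π)
    (hsign : ∀ j ∈ Set.Icc 1 m, 0 < (-1) ^ j * g (x j)) :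
    ∃ r : ℕ → ℝ, InjOn (fun j => exp (r j * I)) (Set.Icc 1 m) ∧
      ∀ j ∈ Set.Icc 1 m, g (r j) = 0 := by
  -- `y` extends `x` by `x 1 + 2π`, where antiperiodicity forces the next sign of the alternation
  set y : ℕ → ℝ := fun j => if j ≤ m then x j else x 1 + 2 * π
  have hy_last : y (m + 1) = y 1 + 2 * π := by simp [y, hm]
  have hy : StrictMonoOn y (Set.Icc 1 (m + 1)) := by
    refine strictMonoOn_Icc_add_one_of_lt (hx.congr fun j hj => ?_) ?_
    · simp [y, hj.2]
    · simpa [hy_last, y, hm] using hwin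
  have hsign_y : ∀ j ∈ Set.Icc 1 (m + 1), 0 < (-1) ^ j * g (y j) := by
    rintro j ⟨hj1, hjm⟩
    rcases (by omega : j ≤ m ∨ j = m + 1) with hj | rfl
    · simpa [y, hj] using hsign j ⟨hj1, hj⟩
    · have hpow : (-1 : ℝ) ^ (m + 1) * (-1) ^ m = (-1) ^ 1 := by
        rw [← pow_add, show m + 1 + m = 2 * m + 1 by ring, pow_succ, pow_mul]; norm_num
      rw [hy_last, hanti, ← mul_assoc, hpow]
      simpa [y, hm] using hsign 1 ⟨le_rfl, hm⟩
  obtain ⟨r, hr⟩ := exists_zeros_interlacing_of_alternating hg hy hsign_y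
  exact ⟨r, injOn_exp_mul_I_of_interlacing hy.monotoneOn hy_last.le fun j hj => (hr j hj).1,
    fun j hj => (hr j hj).2⟩

variable {ι : Type*}

def circlePhase (n : ℕ) (T s : ℝ) : ℂ := (-I) ^ n * exp (((n * s + T) / 2 : ℝ) * I)

def halfSinProd (S : Finset ι) (t : ι → ℝ) (s : ℝ) : ℝ :=
  ∏ k ∈ S, Real.sin ((t k - s) / 2)

theorem norm_circlePhase (n : ℕ) (T s : ℝ) : ‖circlePhase n T s‖ = 1 := by
  rw [circlePhase, norm_mul, norm_pow, norm_neg, norm_I, one_pow, one_mul, norm_exp_ofReal_mul_I]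

theorem prod_exp_mul_I_sub_exp_mul_I (S : Finset ι) (t : ι → ℝ) (s : ℝ) :
    ∏ k ∈ S, (exp (s * I) - exp (t k * I)) =
      circlePhase S.card (∑ k ∈ S, t k) s * (2 ^ S.card * halfSinProd S t s : ℝ) := by
  have hsum : ∑ k ∈ S, ((s + t k) / 2 : ℝ) = (S.card * s + ∑ k ∈ S, t k) / 2 := by
    rw [← Finset.sum_div, Finset.sum_add_distrib, Finset.sum_const, nsmul_eq_mul]
  simp_rw [exp_mul_I_sub_exp_mul_I, Finset.prod_mul_distrib, ← Complex.exp_sum,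
    ← Finset.sum_mul, ← ofReal_sum, hsum, circlePhase, halfSinProd, Finset.prod_const,
    ofReal_mul, ofReal_prod]
  rw [show (-2 : ℂ) ^ S.card * I ^ S.card = (-I) ^ S.card * 2 ^ S.card by
    rw [← mul_pow, ← mul_pow]; ring_nf]
  push_cast
  ring

theorem exp_mul_I_pow_sub_exp_mul_I (n : ℕ) (T s : ℝ) :
    exp (s * I) ^ n - exp ((T - (n + 1) * π : ℝ) * I) =
      circlePhase n T s * (2 * Real.sin ((n * s - T + (n + 1) * π) / 2) : ℝ) := by
  have hphase : exp (((n * s + (T - (n + 1) * π)) / 2 : ℝ) * I) =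
      exp (((n * s + T) / 2 : ℝ) * I) * (-I) ^ (n + 1) := by
    rw [← exp_neg_pi_div_two_mul_I, ← Complex.exp_nat_mul, ← Complex.exp_add]
    push_cast; ring_nf
  rw [← Complex.exp_nat_mul, ← mul_assoc, ← ofReal_natCast, ← ofReal_mul,
    exp_mul_I_sub_exp_mul_I, hphase, circlePhase,
    show (T - (n + 1) * π - n * s) / 2 = -((n * s - T + (n + 1) * π) / 2) by ring, Real.sin_neg]
  push_cast
  ring_nf
  rw [I_sq]
  ring

def circleGap (S : Finset ι) (t : ι → ℝ) (s : ℝ) : ℝ :=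
  2 ^ S.card * halfSinProd S t s -
    2 * Real.sin ((S.card * s - ∑ k ∈ S, t k + (S.card + 1) * π) / 2)

def zerosPoly (S : Finset ι) (t : ι → ℝ) : ℂ[X] := ∏ k ∈ S, (X - C (exp (t k * I)))

-- `w` is chosen so that on the circle `z ^ n - w` has the same phase `circlePhase` as `zerosPoly`
-- (compare `exp_mul_I_pow_sub_exp_mul_I` with `prod_exp_mul_I_sub_exp_mul_I`).
def comparisonPoly (S : Finset ι) (t : ι → ℝ) : ℂ[X] :=
  X ^ S.card - C (exp ((∑ k ∈ S, t k - (S.card + 1) * π : ℝ) * I))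

theorem eval_zerosPoly (S : Finset ι) (t : ι → ℝ) (z : ℂ) :
    (zerosPoly S t).eval z = ∏ k ∈ S, (z - exp (t k * I)) := by
  simp [zerosPoly, eval_prod]

theorem monic_zerosPoly (S : Finset ι) (t : ι → ℝ) : (zerosPoly S t).Monic :=
  monic_prod_of_monic _ _ fun _ _ => monic_X_sub_C _

theorem natDegree_zerosPoly (S : Finset ι) (t : ι → ℝ) :
    (zerosPoly S t).natDegree = S.card := by
  rw [zerosPoly, natDegree_prod_of_monic _ _ fun _ _ => monic_X_sub_C _]
  simp

theorem eval_zerosPoly_sub_comparisonPoly (S : Finset ι) (t : ι → ℝ) (s : ℝ) :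
    (zerosPoly S t).eval (exp (s * I)) - (comparisonPoly S t).eval (exp (s * I)) =
      circlePhase S.card (∑ k ∈ S, t k) s * circleGap S t s := by
  rw [eval_zerosPoly, prod_exp_mul_I_sub_exp_mul_I, comparisonPoly, eval_sub, eval_pow, eval_X,
    eval_C, exp_mul_I_pow_sub_exp_mul_I, ← mul_sub, circleGap]
  push_cast
  ring

theorem eval_zerosPoly_eq_of_circleGap_eq_zero {S : Finset ι} {t : ι → ℝ} {s : ℝ}
    (h : circleGap S t s = 0) :
    (zerosPoly S t).eval (exp (s * I)) = (comparisonPoly S t).eval (exp (s * I)) := by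
  rw [← sub_eq_zero, eval_zerosPoly_sub_comparisonPoly, h, ofReal_zero, mul_zero]

theorem norm_eval_comparisonPoly_le_two (S : Finset ι) (t : ι → ℝ) (s : ℝ) :
    ‖(comparisonPoly S t).eval (exp (s * I))‖ ≤ 2 := by
  rw [comparisonPoly, eval_sub, eval_pow, eval_X, eval_C]
  refine (norm_sub_le _ _).trans ?_
  rw [norm_pow, norm_exp_ofReal_mul_I, norm_exp_ofReal_mul_I]
  norm_num

theorem norm_prod_exp_mul_I_sub_exp_mul_I (S : Finset ι) (t : ι → ℝ) (s : ℝ) :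
    ‖∏ k ∈ S, (exp (s * I) - exp (t k * I))‖ = 2 ^ S.card * |halfSinProd S t s| := by
  rw [prod_exp_mul_I_sub_exp_mul_I, norm_mul, norm_circlePhase, one_mul, norm_real,
    Real.norm_eq_abs, abs_mul, abs_pow, abs_two]

theorem neg_one_pow_card_filter_mul_halfSinProd_pos (S : Finset ι) (t : ι → ℝ) (s : ℝ)
    (h : ∀ k ∈ S, t k ≠ s ∧ |t k - s| < 2 * π) :
    0 < (-1) ^ (S.filter (t · < s)).card * halfSinProd S t s := by
  have hsign : ∀ k ∈ S, 0 < (if t k < s then -1 else 1) * Real.sin ((t k - s) / 2) := by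
    intro k hk
    obtain ⟨hne, hlt⟩ := h k hk
    rw [abs_lt] at hlt
    split_ifs with hks
    · exact mul_pos_of_neg_of_neg (by norm_num)
        (sin_neg_of_neg_of_neg_pi_lt (by linarith) (by linarith))
    · exact mul_pos one_pos (sin_pos_of_pos_of_lt_pi (by grind) (by linarith))
  have := Finset.prod_pos hsign
  rwa [Finset.prod_mul_distrib, Finset.prod_ite, Finset.prod_const, Finset.prod_const_one,
    mul_one] at this

theorem halfSinProd_add_two_pi (S : Finset ι) (t : ι → ℝ) (s : ℝ) :
    halfSinProd S t (s + 2 * π) = (-1) ^ S.card * halfSinProd S t s := by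
  simp_rw [halfSinProd, show ∀ k, (t k - (s + 2 * π)) / 2 = (t k - s) / 2 - π by intro; ring,
    Real.sin_sub_pi, Finset.prod_neg]

theorem circleGap_add_two_pi (S : Finset ι) (t : ι → ℝ) (s : ℝ) :
    circleGap S t (s + 2 * π) = (-1) ^ S.card * circleGap S t s := by
  rw [circleGap, circleGap, halfSinProd_add_two_pi,
    show (S.card * (s + 2 * π) - ∑ k ∈ S, t k + (S.card + 1) * π) / 2 =
      (S.card * s - ∑ k ∈ S, t k + (S.card + 1) * π) / 2 + S.card * π by ring,
    Real.sin_add_nat_mul_pi]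
  ring

theorem continuous_circleGap (S : Finset ι) (t : ι → ℝ) : Continuous (circleGap S t) := by
  unfold circleGap halfSinProd
  fun_prop

theorem neg_one_pow_mul_circleGap_pos {S : Finset ι} {t : ι → ℝ} {s : ℝ} {m : ℕ}
    (hsign : 0 < (-1) ^ m * halfSinProd S t s)
    (hlarge : 2 < ‖∏ k ∈ S, (exp (s * I) - exp (t k * I))‖) :
    0 < (-1) ^ m * circleGap S t s := by
  rw [norm_prod_exp_mul_I_sub_exp_mul_I] at hlarge
  have hsin := abs_le.mp (abs_sin_le_one ((S.card * s - ∑ k ∈ S, t k + (S.card + 1) * π) / 2))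
  rw [circleGap]
  rcases neg_one_pow_eq_or ℝ m with h | h <;> rw [h] at hsign ⊢
  · rw [abs_of_pos (by linarith)] at hlarge
    linarith
  · rw [abs_of_neg (by linarith)] at hlarge
    linarith

section Arcs

variable {n : ℕ} {t : ℕ → ℝ}

theorem apply_lt_of_mem_Ioo (ht : StrictMonoOn t (Set.Icc 1 (n + 1))) {j k : ℕ}
    (hj : j ≤ n) (hk : 1 ≤ k) (hkj : k ≤ j) {s : ℝ} (hs : s ∈ Ioo (t j) (t (j + 1))) :
    t k < s :=
  (ht.monotoneOn ⟨hk, by omega⟩ ⟨by omega, by omega⟩ hkj).trans_lt hs.1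

theorem lt_apply_of_mem_Ioo (ht : StrictMonoOn t (Set.Icc 1 (n + 1))) {j k : ℕ}
    (hj : 1 ≤ j) (hk : k ≤ n + 1) (hjk : j < k) {s : ℝ} (hs : s ∈ Ioo (t j) (t (j + 1))) :
    s < t k :=
  hs.2.trans_le (ht.monotoneOn ⟨by omega, by omega⟩ ⟨by omega, hk⟩ hjk)

theorem filter_lt_eq_Icc_of_mem_Ioo (ht : StrictMonoOn t (Set.Icc 1 (n + 1))) {j : ℕ}
    (hj : j ∈ Finset.Icc 1 n) {s : ℝ} (hs : s ∈ Ioo (t j) (t (j + 1))) :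
    (Finset.Icc 1 n).filter (t · < s) = Finset.Icc 1 j := by
  rw [Finset.mem_Icc] at hj
  ext k
  simp only [Finset.mem_filter, Finset.mem_Icc]
  constructor
  · rintro ⟨⟨hk1, hkn⟩, hks⟩
    exact ⟨hk1, not_lt.mp fun hjk => (lt_apply_of_mem_Ioo ht hj.1 (by omega) hjk hs).not_gt hks⟩
  · rintro ⟨hk1, hkj⟩
    exact ⟨⟨hk1, by omega⟩, apply_lt_of_mem_Ioo ht hj.2 hk1 hkj hs⟩

theorem neg_one_pow_mul_halfSinProd_pos_of_mem_Ioo (ht : StrictMonoOn t (Set.Icc 1 (n + 1)))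
    (hwrap : t (n + 1) = t 1 + 2 * π) {j : ℕ} (hj : j ∈ Finset.Icc 1 n) {s : ℝ}
    (hs : s ∈ Ioo (t j) (t (j + 1))) : 0 < (-1) ^ j * halfSinProd (Finset.Icc 1 n) t s := by
  have hfilter := filter_lt_eq_Icc_of_mem_Ioo ht hj hs
  rw [Finset.mem_Icc] at hj
  have hpos := neg_one_pow_card_filter_mul_halfSinProd_pos (Finset.Icc 1 n) t s fun k hk => by
    rw [Finset.mem_Icc] at hk
    have hne : t k ≠ s := by
      rcases le_or_gt k j with hkj | hjk
      · exact (apply_lt_of_mem_Ioo ht hj.2 hk.1 hkj hs).ne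
      · exact (lt_apply_of_mem_Ioo ht hj.1 (by omega) hjk hs).ne'
    have h1k := ht.monotoneOn ⟨le_rfl, by omega⟩ ⟨hk.1, by omega⟩ hk.1
    have hkl := ht ⟨hk.1, by omega⟩ ⟨by omega, le_rfl⟩ (by omega : k < n + 1)
    have h1j := ht.monotoneOn ⟨le_rfl, by omega⟩ ⟨hj.1, by omega⟩ hj.1
    have hjl := ht.monotoneOn ⟨by omega, by omega⟩ ⟨by omega, le_rfl⟩ (by omega : j + 1 ≤ _)
    exact ⟨hne, abs_lt.mpr ⟨by linarith [hs.2], by linarith [hs.1]⟩⟩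
  rwa [hfilter, Nat.card_Icc, Nat.add_sub_cancel] at hpos

theorem prod_exp_mul_I_sub_eq_zero (hn : 1 ≤ n) (hwrap : t (n + 1) = t 1 + 2 * π) {k : ℕ}
    (hk : k ∈ Set.Icc 1 (n + 1)) :
    ∏ i ∈ Finset.Icc 1 n, (exp (t k * I) - exp (t i * I)) = 0 := by
  obtain ⟨hk1, hkn⟩ := hk
  obtain ⟨i, hi, he⟩ : ∃ i ∈ Finset.Icc 1 n, exp (t k * I) = exp (t i * I) := by
    rcases (by omega : k ≤ n ∨ k = n + 1) with hk | rfl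
    · exact ⟨k, Finset.mem_Icc.mpr ⟨hk1, hk⟩, rfl⟩
    · refine ⟨1, Finset.mem_Icc.mpr ⟨le_rfl, hn⟩, ?_⟩
      rw [hwrap]
      push_cast
      exact exp_mul_I_periodic (t 1)
  exact Finset.prod_eq_zero hi (sub_eq_zero.mpr he)

theorem mem_Ioo_of_two_lt_norm (hn : 1 ≤ n) (hwrap : t (n + 1) = t 1 + 2 * π) {j : ℕ}
    (hj : j ∈ Finset.Icc 1 n) {s : ℝ} (hs : s ∈ Set.Icc (t j) (t (j + 1)))
    (hlarge : 2 < ‖∏ k ∈ Finset.Icc 1 n, (exp (s * I) - exp (t k * I))‖) :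
    s ∈ Ioo (t j) (t (j + 1)) := by
  rw [Finset.mem_Icc] at hj
  refine ⟨lt_of_le_of_ne hs.1 ?_, lt_of_le_of_ne hs.2 ?_⟩ <;> rintro rfl
  · rw [prod_exp_mul_I_sub_eq_zero hn hwrap ⟨hj.1, by omega⟩, norm_zero] at hlarge
    norm_num at hlarge
  · rw [prod_exp_mul_I_sub_eq_zero hn hwrap ⟨by omega, by omega⟩, norm_zero] at hlarge
    norm_num at hlarge

theorem exists_arc_forall_norm_le_two (hn : 1 ≤ n) (ht : StrictMonoOn t (Set.Icc 1 (n + 1)))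
    (hwrap : t (n + 1) = t 1 + 2 * π) :
    ∃ j ∈ Finset.Icc 1 n, ∀ s ∈ Set.Icc (t j) (t (j + 1)),
      ‖∏ k ∈ Finset.Icc 1 n, (exp (s * I) - exp (t k * I))‖ ≤ 2 := by
  by_contra! h
  choose! x hx hlarge using h
  set S := Finset.Icc 1 n
  have hcard : S.card = n := by simp [S]
  have hIoo : ∀ j ∈ S, x j ∈ Ioo (t j) (t (j + 1)) := fun j hj =>
    mem_Ioo_of_two_lt_norm hn hwrap hj (hx j hj) (hlarge j hj)
  have hx_mono : StrictMonoOn x (Set.Icc 1 n) := fun j ⟨hj1, hjn⟩ k ⟨hk1, hkn⟩ hjk =>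
    (hIoo j (Finset.mem_Icc.mpr ⟨hj1, hjn⟩)).2.trans_le
      ((ht.monotoneOn ⟨by omega, by omega⟩ ⟨hk1, by omega⟩ hjk).trans
        (hIoo k (Finset.mem_Icc.mpr ⟨hk1, hkn⟩)).1.le)
  have hwin : x n < x 1 + 2 * π := by
    have h1 := (hIoo 1 (Finset.mem_Icc.mpr ⟨le_rfl, hn⟩)).1
    have hn' := (hIoo n (Finset.mem_Icc.mpr ⟨hn, le_rfl⟩)).2
    linarith
  have hsign : ∀ j ∈ Set.Icc 1 n, 0 < (-1) ^ j * circleGap S t (x j) := fun j hj =>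
    have hj : j ∈ S := Finset.mem_Icc.mpr hj
    neg_one_pow_mul_circleGap_pos
      (neg_one_pow_mul_halfSinProd_pos_of_mem_Ioo ht hwrap hj (hIoo j hj)) (hlarge j hj)
  obtain ⟨r, hr_inj, hr⟩ :=
    exists_zeros_injOn_exp_mul_I_of_alternating (continuous_circleGap S t) hn
      (fun s => by rw [circleGap_add_two_pi, hcard]) hx_mono hwin hsign
  have hpoly : zerosPoly S t = comparisonPoly S t :=
    (monic_zerosPoly S t).eq_X_pow_sub_C_of_eval_eq (natDegree_zerosPoly S t) (by omega) S
      (by rwa [Finset.coe_Icc]) le_rfl fun j hj =>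
        eval_zerosPoly_eq_of_circleGap_eq_zero (hr j (Finset.mem_Icc.mp hj))
  have hlarge1 := hlarge 1 (Finset.mem_Icc.mpr ⟨le_rfl, hn⟩)
  rw [← eval_zerosPoly, hpoly] at hlarge1
  exact hlarge1.not_ge (norm_eval_comparisonPoly_le_two S t (x 1))

end Arcs

end

/-- For a monic polynomial with all zeros on the unit circle, the minimum over arcs between
consecutive zeros of the maximum of `|P|` on that arc is at most `2`. -/
theorem min_max_le_two (n : ℕ) (hn : 1 ≤ n) (t : ℕ → ℝ)
    (h0 : 0 ≤ t 1) (hmono : StrictMonoOn t (Set.Icc 1 n)) (hlast : t n < 2 * Real.pi)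
    (hwrap : t (n + 1) = t 1 + 2 * Real.pi)
    (P : ℂ → ℂ)
    (hP : P = fun z => ∏ j ∈ Finset.Icc 1 n, (z - Complex.exp (t j * Complex.I))) :
    (Finset.Icc 1 n).inf' (Finset.nonempty_Icc.mpr hn)
      (fun j => sSup ((fun s : ℝ => ‖P (Complex.exp (s * Complex.I))‖) ''
        Set.Icc (t j) (t (j + 1)))) ≤ 2 := by
  subst hP
  have ht : StrictMonoOn t (Set.Icc 1 (n + 1)) :=
    strictMonoOn_Icc_add_one_of_lt hmono (by linarith)
  obtain ⟨j, hj, hle⟩ := exists_arc_forall_norm_le_two hn ht hwrap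
  refine (Finset.inf'_le _ hj).trans (csSup_le ?_ ?_)
  · obtain ⟨hj1, hjn⟩ := Finset.mem_Icc.mp hj
    have htj := ht ⟨hj1, by omega⟩ ⟨by omega, by omega⟩ j.lt_succ_self
    exact (nonempty_Icc.mpr htj.le).image _
  · rintro _ ⟨s, hs, rfl⟩
    exact hle s hs
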